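/- In the deformed GL_{h,g}(2) algebra defined by the RTT relation R̄ T₁ T₂ = T₂ T₁ R̄ with T = [[a,b],[c,d]], the element det T := ad − bc − (h+g)ac satisfies [c, det T] = 0. -/

import Mathlib

open Matrix Kronecker

open Fin.NatCast in
/-- R̄(h,g) with entries in an algebra A, as an operator on A²⊗A² via the
identification e₁=(0,0), e₂=(0,1), e₃=(1,0), e₄=(1,1). -/
def RbarA {k A : Type*} [CommRing k] [Ring A] [Algebra k A] (h g : k) :
    Matrix (Fin 2 × Fin 2) (Fin 2 × Fin 2) A :=
  fun p q =>
    algebraMap k A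
      ((!![1, h+g, -h-g, h^2-g^2;
           0, 1,   0,    h-g;
           0, 0,   1,    -h+g;
           0, 0,   0,    1] : Matrix (Fin 4) (Fin 4) k)
        (2 * p.1 + p.2 : Fin 4) (2 * q.1 + q.2 : Fin 4))

/-- T₁ = T⊗I₂ for T a 2×2 matrix with (possibly noncommuting) entries. -/
def T1 {A : Type*} [Ring A] (T : Matrix (Fin 2) (Fin 2) A) :
    Matrix (Fin 2 × Fin 2) (Fin 2 × Fin 2) A :=
  T ⊗ₖ (1 : Matrix (Fin 2) (Fin 2) A)

/-- T₂ = I₂⊗T for T a 2×2 matrix with (possibly noncommuting) entries. -/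
def T2 {A : Type*} [Ring A] (T : Matrix (Fin 2) (Fin 2) A) :
    Matrix (Fin 2 × Fin 2) (Fin 2 × Fin 2) A :=
  (1 : Matrix (Fin 2) (Fin 2) A) ⊗ₖ T

/-! The RTT relation at the entries ((0,1),(0,0)), ((0,1),(1,0)) and ((1,1),(0,1)) gives rules for
moving `c` to the right past `a`, `b` and `d`, with corrections in `c²`, `dc` and `ca`. Pushing `c`
through `ad − bc − (h+g)ac` with these rules, all corrections cancel because the scalars `h ± g` are
central; the term `−(h+g)ac` is what absorbs the `(h+g)ca` correction coming from `cb`. -/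

theorem commute_c_qdet_of_relations {R : Type*} [Ring R] {α β a b c d : R}
    (hαa : Commute α a) (hαc : Commute α c) (hαβ : Commute α β)
    (hca : c * a = a * c + β * (c * c)) (hcb : c * b = b * c + β * (d * c) + α * (c * a))
    (hcd : c * d = d * c + α * (c * c)) :
    Commute c (a * d - b * c - α * (a * c)) := by
  unfold Commute SemiconjBy
  linear_combination (norm := noncomm_ring) hca * d + a * hcd + (β * c) * hcd + β * hcd * c
    - hcb * c - 2 * (α * hca * c) - hαa.eq * (c * c) + hαc.eq * (a * c) - β * hαc.eq * (c * c)
    - 2 * hαβ.eq * (c * c * c)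

def IsRTT {k A : Type*} [CommRing k] [Ring A] [Algebra k A] (h g : k)
    (T : Matrix (Fin 2) (Fin 2) A) : Prop :=
  RbarA h g * (T1 T * T2 T) = (T2 T * T1 T) * RbarA h g

open Fin.NatCast in
theorem IsRTT.c_commutation_relations {k A : Type*} [CommRing k] [Ring A] [Algebra k A]
    {h g : k} {a b c d : A} (hT : IsRTT h g !![a, b; c, d]) :
    c * a = a * c + algebraMap k A (h - g) * (c * c) ∧
    c * b = b * c + algebraMap k A (h - g) * (d * c) + algebraMap k A (h + g) * (c * a) ∧
    c * d = d * c + algebraMap k A (h + g) * (c * c) := by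
  have eca := congr_fun₂ hT (0, 1) (0, 0)
  have ecb := congr_fun₂ hT (0, 1) (1, 0)
  have ecd := congr_fun₂ hT (1, 1) (0, 1)
  simp only [T1, T2, Fin.isValue, mul_apply, RbarA, Fin.coe_ofNat_eq_mod, Nat.zero_mod,
    Nat.cast_zero, mul_zero, Nat.mod_succ, Nat.cast_one, zero_add, of_apply, cons_val',
    cons_val_fin_one, cons_val_one, cons_val_zero, kroneckerMap_apply, one_apply, mul_ite, mul_one,
    ite_mul, one_mul, zero_mul, Fintype.sum_prod_type, Finset.sum_ite_irrel, Finset.sum_ite_eq,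
    Finset.mem_univ, ↓reduceIte, Finset.sum_const_zero, Finset.sum_ite_eq', Fin.sum_univ_two,
    add_zero, map_zero, map_one, cons_val, Fin.reduceAdd, map_sub, map_neg, map_add]
    at eca ecb ecd
  simp only [map_sub, map_add]
  refine ⟨eca.symm, ?_, ?_⟩
  · linear_combination (norm := noncomm_ring)
      -ecb - Algebra.commutes h (c * a) - Algebra.commutes g (c * a)
  · linear_combination (norm := noncomm_ring)
      ecd - Algebra.commutes h (c * c) - Algebra.commutes g (c * c)

/-- In GL_{h,g}(2), defined by the RTT relation R̄T₁T₂ = T₂T₁R̄ with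
T = [[a,b],[c,d]], the quantum determinant det T = ad − bc − (h+g)ac
satisfies [c, det T] = 0. -/
theorem detT_commutes_c (k A : Type*) [CommRing k] [Ring A] [Algebra k A]
    (h g : k) (a b c d : A)
    (hRTT : RbarA h g * (T1 !![a, b; c, d] * T2 !![a, b; c, d]) =
            (T2 !![a, b; c, d] * T1 !![a, b; c, d]) * RbarA h g) :
    c * (a * d - b * c - algebraMap k A (h + g) * (a * c)) =
      (a * d - b * c - algebraMap k A (h + g) * (a * c)) * c := by
  obtain ⟨hca, hcb, hcd⟩ := IsRTT.c_commutation_relations hRTT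
  exact commute_c_qdet_of_relations (Algebra.commutes' _ a) (Algebra.commutes' _ c)
    (Algebra.commutes' _ _) hca hcb hcd
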